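/- arXiv:1509.05289 — 5 statements merged into one kernel-verified Lean document; each statement's English description precedes it below -/
import Mathlib

section
/- Let x* be feasible for the SVM dual problem with I_up(x*) ≠ ∅ and I_low(x*) ≠ ∅. Then x* is optimal if and only if max_{r ∈ I_up(x*)} (−∇f(x*)_r / y_r) ≤ min_{r ∈ I_low(x*)} (−∇f(x*)_r / y_r). -/
open Matrix Finset
open scoped Classical

private lemma mnn {a b : ℝ} (ha : a ≤ 0) (hb : b ≤ 0) : 0 ≤ a * b := by nlinarith

/-- optimality iff m(x*) ≤ M(x*) when I_up and I_low are nonempty. -/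
theorem optimal_iff_m_le_M (n : ℕ) (Q : Matrix (Fin n) (Fin n) ℝ) (y : Fin n → ℝ) (C : ℝ)
    (hQsym : Q.IsSymm) (hQpsd : Q.PosSemidef)
    (hy : ∀ r, y r = 1 ∨ y r = -1) (hC : 0 < C)
    (f : (Fin n → ℝ) → ℝ)
    (hf : ∀ x, f x = (1 / 2) * (x ⬝ᵥ Q.mulVec x) - ∑ r, x r)
    (F : Set (Fin n → ℝ))
    (hF : F = {x | (∑ r, y r * x r) = 0 ∧ ∀ r, 0 ≤ x r ∧ x r ≤ C})
    (xs : Fin n → ℝ) (hxs : xs ∈ F)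
    (Iup Ilow : Finset (Fin n))
    (hIup : Iup = Finset.univ.filter
      (fun r => (xs r < C ∧ y r = 1) ∨ (0 < xs r ∧ y r = -1)))
    (hIlow : Ilow = Finset.univ.filter
      (fun r => (xs r < C ∧ y r = -1) ∨ (0 < xs r ∧ y r = 1)))
    (hup : Iup.Nonempty) (hlow : Ilow.Nonempty) :
    (∀ x ∈ F, f xs ≤ f x) ↔
      Iup.sup' hup (fun r => -(Q.mulVec xs r - 1) / y r)
        ≤ Ilow.inf' hlow (fun r => -(Q.mulVec xs r - 1) / y r) := by
  -- notation
  set g : Fin n → ℝ := fun r => Q.mulVec xs r - 1 with hg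
  have hsym : ∀ a b : Fin n → ℝ, a ⬝ᵥ Q.mulVec b = b ⬝ᵥ Q.mulVec a := by
    intro a b
    rw [Matrix.dotProduct_mulVec, ← Matrix.mulVec_transpose, hQsym.eq, dotProduct_comm]
  have hpsd : ∀ b : Fin n → ℝ, 0 ≤ b ⬝ᵥ Q.mulVec b := by
    intro b; have := hQpsd.dotProduct_mulVec_nonneg b; simpa using this
  -- second-order expansion of f
  have hexp : ∀ b : Fin n → ℝ,
      f (xs + b) = f xs + (∑ r, b r * g r) + (1 / 2) * (b ⬝ᵥ Q.mulVec b) := by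
    intro b
    have hsub : ∑ r, b r * g r = b ⬝ᵥ Q.mulVec xs - ∑ r, b r := by
      simp [hg, dotProduct, mul_sub, Finset.sum_sub_distrib]
    rw [hf, hf, hsub]
    simp only [Matrix.mulVec_add, dotProduct_add, add_dotProduct, Pi.add_apply,
      Finset.sum_add_distrib]
    rw [hsym xs b]
    ring
  rw [hF] at hxs
  obtain ⟨hsumxs, hbox⟩ := hxs
  have memUp : ∀ r, ((xs r < C ∧ y r = 1) ∨ (0 < xs r ∧ y r = -1)) → r ∈ Iup := by
    intro r hr; rw [hIup]; simp [hr]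
  have memLow : ∀ r, ((xs r < C ∧ y r = -1) ∨ (0 < xs r ∧ y r = 1)) → r ∈ Ilow := by
    intro r hr; rw [hIlow]; simp [hr]
  have hy2 : ∀ r, y r * y r = 1 := by
    intro r; rcases hy r with h | h <;> rw [h] <;> norm_num
  constructor
  · -- optimal → m ≤ M
    intro hopt
    apply Finset.sup'_le
    intro i hi
    apply Finset.le_inf'
    intro j hj
    rw [hIup, Finset.mem_filter] at hi
    rw [hIlow, Finset.mem_filter] at hj
    by_cases hij : i = j
    · subst hij; exact le_refl _
    -- movement directions
    obtain ⟨εi, hεi, hεiP⟩ :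
        ∃ ε, 0 < ε ∧ ∀ t, 0 ≤ t → t ≤ ε → 0 ≤ xs i + t * y i ∧ xs i + t * y i ≤ C := by
      rcases hi.2 with ⟨h1, h2⟩ | ⟨h1, h2⟩
      · exact ⟨C - xs i, by linarith, fun t ht1 ht2 => by
          rw [h2]; constructor <;> [linarith [(hbox i).1]; linarith]⟩
      · exact ⟨xs i, h1, fun t ht1 ht2 => by
          rw [h2]; constructor <;> [linarith; linarith [(hbox i).2]]⟩
    obtain ⟨εj, hεj, hεjP⟩ :
        ∃ ε, 0 < ε ∧ ∀ t, 0 ≤ t → t ≤ ε → 0 ≤ xs j - t * y j ∧ xs j - t * y j ≤ C := by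
      rcases hj.2 with ⟨h1, h2⟩ | ⟨h1, h2⟩
      · exact ⟨C - xs j, by linarith, fun t ht1 ht2 => by
          rw [h2]; constructor <;> [linarith [(hbox j).1]; linarith]⟩
      · exact ⟨xs j, h1, fun t ht1 ht2 => by
          rw [h2]; constructor <;> [linarith; linarith [(hbox j).2]]⟩
    set t₀ := min εi εj with ht₀
    have ht₀pos : 0 < t₀ := lt_min hεi hεj
    set d : Fin n → ℝ := fun r => (if r = i then y i else 0) + (if r = j then -(y j) else 0)
      with hd
    have hdi : d i = y i := by simp [hd, hij]
    have hdj : d j = -(y j) := by simp [hd, Ne.symm hij]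
    have hd0 : ∀ r, r ≠ i → r ≠ j → d r = 0 := by intro r h1 h2; simp [hd, h1, h2]
    set A : ℝ := y i * g i - y j * g j with hA
    have hyd : ∑ r, y r * d r = 0 := by
      have : ∑ r, y r * d r = y i * y i - y j * y j := by
        simp [hd, mul_add, mul_ite, Finset.sum_add_distrib]
        ring
      rw [this, hy2 i, hy2 j]; ring
    have hgd : ∑ r, d r * g r = A := by
      simp [hd, add_mul, ite_mul, Finset.sum_add_distrib, hA]
      ring
    have hfeas : ∀ t, 0 < t → t ≤ t₀ → (xs + t • d) ∈ F := by
      intro t ht ht'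
      rw [hF]
      refine ⟨?_, ?_⟩
      · have : ∑ r, y r * (xs r + t * d r) = (∑ r, y r * xs r) + t * ∑ r, y r * d r := by
          rw [Finset.mul_sum, ← Finset.sum_add_distrib]
          exact Finset.sum_congr rfl fun r _ => by ring
        simpa [this, hsumxs, hyd] using this.trans (by rw [hsumxs, hyd]; ring)
      · intro r
        show 0 ≤ xs r + t * d r ∧ xs r + t * d r ≤ C
        by_cases h1 : r = i
        · subst h1; rw [hdi]
          exact hεiP t ht.le (le_trans ht' (min_le_left _ _))
        by_cases h2 : r = j
        · subst h2; rw [hdj]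
          have := hεjP t ht.le (le_trans ht' (min_le_right _ _))
          constructor <;> [linarith [this.1]; linarith [this.2]]
        · rw [hd0 r h1 h2]
          simpa using hbox r
    set B : ℝ := d ⬝ᵥ Q.mulVec d with hB
    have hBnn : 0 ≤ B := hpsd d
    have key : ∀ t, 0 < t → t ≤ t₀ → 0 ≤ A + (t / 2) * B := by
      intro t ht ht'
      have h1 := hopt _ (hfeas t ht ht')
      rw [hexp (t • d)] at h1
      have hs1 : ∑ r, (t • d) r * g r = t * A := by
        rw [← hgd, Finset.mul_sum]
        exact Finset.sum_congr rfl fun r _ => by simp [smul_eq_mul]; ring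
      have hs2 : (t • d) ⬝ᵥ Q.mulVec (t • d) = t ^ 2 * B := by
        rw [hB, Matrix.mulVec_smul, dotProduct_smul, smul_dotProduct]
        simp [smul_eq_mul]; ring
      rw [hs1, hs2] at h1
      nlinarith [h1, ht]
    have hApos : 0 ≤ A := by
      rcases eq_or_lt_of_le hBnn with hB0 | hBpos
      · have := key t₀ ht₀pos le_rfl
        rw [← hB0] at this; linarith
      · by_contra hA0
        push_neg at hA0
        set t := min t₀ (-A / B) with ht
        have htpos : 0 < t := lt_min ht₀pos (div_pos (by linarith) hBpos)
        have h1 := key t htpos (min_le_left _ _)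
        have h2 : t * B ≤ -A := by
          have := mul_le_mul_of_nonneg_right (min_le_right t₀ (-A / B)) hBnn
          rwa [div_mul_cancel₀ (-A) (ne_of_gt hBpos)] at this
        nlinarith
    -- convert 0 ≤ A to the division inequality
    have hApos' : 0 ≤ y i * (Q.mulVec xs i - 1) - y j * (Q.mulVec xs j - 1) := by
      simpa [hA, hg] using hApos
    rcases hy i with e1 | e1 <;> rcases hy j with e2 | e2 <;>
      rw [e1, e2] at hApos' <;> simp only [e1, e2] <;> norm_num at hApos' ⊢ <;> linarith
  · -- m ≤ M → optimal
    intro hmM x hx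
    rw [hF] at hx
    obtain ⟨hsumx, hxbox⟩ := hx
    set hfun : Fin n → ℝ := fun r => -(Q.mulVec xs r - 1) / y r with hhfun
    set ρ : ℝ := Iup.sup' hup hfun with hρ
    have hρup : ∀ r ∈ Iup, hfun r ≤ ρ := fun r hr => Finset.le_sup' _ hr
    have hρlow : ∀ r ∈ Ilow, ρ ≤ hfun r := fun r hr => le_trans hmM (Finset.inf'_le _ hr)
    have hterm : ∀ r, 0 ≤ (x r - xs r) * (g r + ρ * y r) := by
      intro r
      have hgr : g r = Q.mulVec xs r - 1 := by simp [hg]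
      rcases lt_trichotomy (x r) (xs r) with hlt | heq | hgt
      · have hpos : 0 < xs r := lt_of_le_of_lt (hxbox r).1 hlt
        rcases hy r with e | e
        · have h2 := hρlow r (memLow r (Or.inr ⟨hpos, e⟩))
          simp only [hhfun, e, div_one] at h2
          exact mnn (by linarith) (by rw [hgr, e]; linarith)
        · have h2 := hρup r (memUp r (Or.inr ⟨hpos, e⟩))
          simp only [hhfun, e, div_neg, div_one, neg_neg] at h2
          exact mnn (by linarith) (by rw [hgr, e]; linarith)
      · simp [heq]
      · have hltC : xs r < C := lt_of_lt_of_le hgt (hxbox r).2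
        rcases hy r with e | e
        · have h2 := hρup r (memUp r (Or.inl ⟨hltC, e⟩))
          simp only [hhfun, e, div_one] at h2
          exact mul_nonneg (by linarith) (by rw [hgr, e]; linarith)
        · have h2 := hρlow r (memLow r (Or.inl ⟨hltC, e⟩))
          simp only [hhfun, e, div_neg, div_one, neg_neg] at h2
          exact mul_nonneg (by linarith) (by rw [hgr, e]; linarith)
    have hyd0 : ∑ r, y r * (x r - xs r) = 0 := by
      simp [mul_sub, Finset.sum_sub_distrib, hsumx, hsumxs]
    have hS : 0 ≤ ∑ r, (x r - xs r) * g r := by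
      have hsplit : ∑ r, (x r - xs r) * g r
          = (∑ r, (x r - xs r) * (g r + ρ * y r)) - ρ * ∑ r, y r * (x r - xs r) := by
        rw [Finset.mul_sum, ← Finset.sum_sub_distrib]
        exact Finset.sum_congr rfl fun r _ => by ring
      rw [hsplit, hyd0]
      have : 0 ≤ ∑ r, (x r - xs r) * (g r + ρ * y r) :=
        Finset.sum_nonneg fun r _ => hterm r
      linarith
    have hxeq : x = xs + (x - xs) := by abel
    rw [hxeq, hexp (x - xs)]
    have := hpsd (x - xs)
    have hS' : 0 ≤ ∑ r, (x - xs) r * g r := by simpa using hS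
    linarith
end

section
/- If x* is a feasible, non-optimal point of the SVM dual problem, then the singleton block consisting of the most violating pair P = {i_MVP, j_MVP} is a descent block: the solution x̂_P of the restricted subproblem over P satisfies ‖x̂_P − x*_P‖ ≥ ε·S_MVP(x*) for some ε > 0 (indeed with ε = 1). -/
open Matrix Finset
open scoped Classical

private lemma symmdot {n : ℕ} {Q : Matrix (Fin n) (Fin n) ℝ} (h : Q.IsSymm)
    (a b : Fin n → ℝ) : a ⬝ᵥ Q.mulVec b = b ⬝ᵥ Q.mulVec a := by
  rw [Matrix.dotProduct_mulVec, ← Matrix.mulVec_transpose, h.eq, dotProduct_comm]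

private lemma fval {n : ℕ} {Q : Matrix (Fin n) (Fin n) ℝ} (hQ : Q.IsSymm)
    (x dd : Fin n → ℝ) (s : ℝ) :
    (1/2)*((fun r => x r + s * dd r) ⬝ᵥ Q.mulVec (fun r => x r + s * dd r)) - ∑ r, (x r + s*dd r)
    = ((1/2)*(x ⬝ᵥ Q.mulVec x) - ∑ r, x r) + s * (∑ r, (Q.mulVec x r - 1)*dd r)
      + s^2/2 * (dd ⬝ᵥ Q.mulVec dd) := by
  have key : (fun r => x r + s*dd r) = x + s • dd := by
    funext r; simp [smul_eq_mul]
  have hsum : ∑ r, (x r + s*dd r) = (∑ r, x r) + s * ∑ r, dd r := by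
    rw [Finset.sum_add_distrib, Finset.mul_sum]
  rw [hsum, key, Matrix.mulVec_add, Matrix.mulVec_smul]
  have hgrad : ∑ r, (Q.mulVec x r - 1)*dd r = (Q.mulVec x ⬝ᵥ dd) - ∑ r, dd r := by
    simp [dotProduct, sub_mul, Finset.sum_sub_distrib]
  have hcross : dd ⬝ᵥ Q.mulVec x = x ⬝ᵥ Q.mulVec dd := symmdot hQ dd x
  have hcross2 : Q.mulVec x ⬝ᵥ dd = x ⬝ᵥ Q.mulVec dd := by
    rw [dotProduct_comm]; exact hcross
  simp only [add_dotProduct, dotProduct_add, smul_dotProduct,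
    dotProduct_smul, smul_eq_mul, hgrad, hcross2]
  rw [hcross]
  ring

/-- at a feasible non-optimal point the singleton block made of the most
violating pair is a descent block, with constant ε = 1. -/
theorem mvp_block_is_descent (n : ℕ) (Q : Matrix (Fin n) (Fin n) ℝ) (y : Fin n → ℝ) (C : ℝ)
    (hQsym : Q.IsSymm) (hQpsd : Q.PosSemidef)
    (hy : ∀ r, y r = 1 ∨ y r = -1) (hC : 0 < C)
    (f : (Fin n → ℝ) → ℝ)
    (hf : ∀ x, f x = (1 / 2) * (x ⬝ᵥ Q.mulVec x) - ∑ r, x r)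
    (F : Set (Fin n → ℝ))
    (hF : F = {x | (∑ r, y r * x r) = 0 ∧ ∀ r, 0 ≤ x r ∧ x r ≤ C})
    (xs : Fin n → ℝ) (hxs : xs ∈ F)
    (hnotopt : ¬ ∀ x ∈ F, f xs ≤ f x)
    (Iup Ilow : Finset (Fin n))
    (hIup : Iup = Finset.univ.filter
      (fun r => (xs r < C ∧ y r = 1) ∨ (0 < xs r ∧ y r = -1)))
    (hIlow : Ilow = Finset.univ.filter
      (fun r => (xs r < C ∧ y r = -1) ∨ (0 < xs r ∧ y r = 1)))
    -- the most violating pair (i,j)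
    (i j : Fin n)
    (hi : i ∈ Iup) (hj : j ∈ Ilow)
    (hmaxi : ∀ r ∈ Iup, -(Q.mulVec xs r - 1) / y r ≤ -(Q.mulVec xs i - 1) / y i)
    (hminj : ∀ r ∈ Ilow, -(Q.mulVec xs j - 1) / y j ≤ -(Q.mulVec xs r - 1) / y r)
    -- the MVP direction, largest feasible step, exact stepsize and most violating step
    (d : Fin n → ℝ)
    (hd : ∀ r, d r = if r = i then 1 / y i else if r = j then -(1 / y j) else 0)
    (βi βj βbar α S : ℝ)
    (hβi : βi = if d i < 0 then xs i else C - xs i)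
    (hβj : βj = if d j < 0 then xs j else C - xs j)
    (hβbar : βbar = min βi βj)
    (hα : α =
      if 0 ≤ ∑ r, (Q.mulVec xs r - 1) * d r then 0
      else if d ⬝ᵥ Q.mulVec d = 0 then βbar
      else min (-(∑ r, (Q.mulVec xs r - 1) * d r) / (d ⬝ᵥ Q.mulVec d)) βbar)
    (hS : S = |α| * Real.sqrt 2)
    -- x̂ is the optimal solution of the subproblem restricted to the block P = {i, j}
    (xhat : Fin n → ℝ)
    (hagree : ∀ r, r ≠ i → r ≠ j → xhat r = xs r)
    (hblkeq : y i * xhat i + y j * xhat j = y i * xs i + y j * xs j)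
    (hblkbox : (0 ≤ xhat i ∧ xhat i ≤ C) ∧ (0 ≤ xhat j ∧ xhat j ≤ C))
    (hopt : ∀ z : Fin n → ℝ, (∀ r, r ≠ i → r ≠ j → z r = xs r) →
      y i * z i + y j * z j = y i * xs i + y j * xs j →
      (0 ≤ z i ∧ z i ≤ C) → (0 ≤ z j ∧ z j ≤ C) → f xhat ≤ f z) :
    Real.sqrt ((xhat i - xs i) ^ 2 + (xhat j - xs j) ^ 2) ≥ 1 * S := by
  classical
  rw [hF] at hxs
  simp only [Set.mem_setOf_eq] at hxs
  obtain ⟨hxeq, hxbox⟩ := hxs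
  have hy2 : ∀ r, y r * y r = 1 := by
    intro r; rcases hy r with h | h <;> rw [h] <;> norm_num
  have hyne : ∀ r, y r ≠ 0 := by
    intro r; rcases hy r with h | h <;> rw [h] <;> norm_num
  have hyinv : ∀ r, 1 / y r = y r := by
    intro r; rcases hy r with h | h <;> rw [h] <;> norm_num
  by_cases hij : i = j
  · -- degenerate case: the KKT conditions hold, so xs is optimal, contradiction
    exfalso
    subst hij
    apply hnotopt
    intro x hx
    rw [hF] at hx
    simp only [Set.mem_setOf_eq] at hx
    obtain ⟨hxe, hxb⟩ := hx
    -- convexity inequality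
    have hconv : f xs + ∑ r, (Q.mulVec xs r - 1) * (x r - xs r) ≤ f x := by
      have h2 : (fun r => xs r + 1 * (x r - xs r)) = x := by funext r; ring
      have h1 : f (fun r => xs r + 1 * (x r - xs r))
          = f xs + 1 * (∑ r, (Q.mulVec xs r - 1) * (x r - xs r))
          + 1 ^ 2 / 2 * ((fun r => x r - xs r) ⬝ᵥ Q.mulVec (fun r => x r - xs r)) := by
        rw [hf, hf]
        exact fval hQsym xs (fun r => x r - xs r) 1
      rw [h2] at h1
      have h3 : 0 ≤ (fun r => x r - xs r) ⬝ᵥ Q.mulVec (fun r => x r - xs r) := by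
        simpa using hQpsd.dotProduct_mulVec_nonneg (fun r => x r - xs r)
      linarith
    have hzero : ∑ r, y r * (x r - xs r) = 0 := by
      simp only [mul_sub]
      rw [Finset.sum_sub_distrib, hxe, hxeq, sub_self]
    have hsplit : ∑ r, (Q.mulVec xs r - 1) * (x r - xs r)
        = (∑ r, ((-(Q.mulVec xs i - 1) / y i) - (-(Q.mulVec xs r - 1) / y r))
            * (y r * (x r - xs r)))
          - (-(Q.mulVec xs i - 1) / y i) * ∑ r, y r * (x r - xs r) := by
      rw [Finset.mul_sum, ← Finset.sum_sub_distrib]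
      apply Finset.sum_congr rfl
      intro r _
      have hdmc : -(Q.mulVec xs r - 1) / y r * y r = -(Q.mulVec xs r - 1) :=
        div_mul_cancel₀ _ (hyne r)
      linear_combination (x r - xs r) * hdmc
    have hpos : ∀ r, 0 ≤ ((-(Q.mulVec xs i - 1) / y i) - (-(Q.mulVec xs r - 1) / y r))
        * (y r * (x r - xs r)) := by
      intro r
      rcases lt_trichotomy (y r * (x r - xs r)) 0 with hlt | heq | hgt
      · have hr : r ∈ Ilow := by
          rw [hIlow, Finset.mem_filter]
          refine ⟨Finset.mem_univ r, ?_⟩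
          rcases hy r with h1 | h1
          · right
            rw [h1, one_mul] at hlt
            exact ⟨by linarith [(hxb r).1], h1⟩
          · left
            rw [h1] at hlt
            exact ⟨by linarith [(hxb r).2], h1⟩
        have hvr := hminj r hr
        nlinarith [mul_nonneg (neg_nonneg.mpr (sub_nonpos.mpr hvr))
          (neg_nonneg.mpr hlt.le)]
      · rw [heq, mul_zero]
      · have hr : r ∈ Iup := by
          rw [hIup, Finset.mem_filter]
          refine ⟨Finset.mem_univ r, ?_⟩
          rcases hy r with h1 | h1
          · left
            rw [h1, one_mul] at hgt
            exact ⟨by linarith [(hxb r).2], h1⟩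
          · right
            rw [h1] at hgt
            exact ⟨by linarith [(hxb r).1], h1⟩
        have hvr := hmaxi r hr
        exact mul_nonneg (sub_nonneg.mpr hvr) hgt.le
    have hsum : 0 ≤ ∑ r, ((-(Q.mulVec xs i - 1) / y i) - (-(Q.mulVec xs r - 1) / y r))
        * (y r * (x r - xs r)) := Finset.sum_nonneg fun r _ => hpos r
    rw [hsplit, hzero, mul_zero, sub_zero] at hconv
    linarith
  · -- main case: i ≠ j
    set g : ℝ := ∑ r, (Q.mulVec xs r - 1) * d r with hgdef
    set q : ℝ := d ⬝ᵥ Q.mulVec d with hqdef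
    have hq0 : 0 ≤ q := by rw [hqdef]; simpa using hQpsd.dotProduct_mulVec_nonneg d
    have hdi : d i = y i := by rw [hd i]; simp [hyinv i]
    have hdj : d j = -y j := by
      rw [hd j]
      simp [Ne.symm hij, hyinv j]
    have hβi0 : 0 ≤ βi := by
      rw [hβi]; split
      · exact (hxbox i).1
      · linarith [(hxbox i).2]
    have hβj0 : 0 ≤ βj := by
      rw [hβj]; split
      · exact (hxbox j).1
      · linarith [(hxbox j).2]
    have hβbar0 : 0 ≤ βbar := by rw [hβbar]; exact le_min hβi0 hβj0
    have hα0 : 0 ≤ α := by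
      rw [hα]; split_ifs with h1 h2
      · exact le_refl 0
      · exact hβbar0
      · refine le_min (div_nonneg ?_ hq0) hβbar0
        push_neg at h1; linarith
    have hαβ : α ≤ βbar := by
      rw [hα]; split_ifs with h1 h2
      · exact hβbar0
      · exact le_refl βbar
      · exact min_le_right _ _
    set t : ℝ := y i * (xhat i - xs i) with htdef
    have hxi : xhat i - xs i = t * d i := by
      rw [hdi, htdef]
      calc xhat i - xs i = (y i * y i) * (xhat i - xs i) := by rw [hy2 i]; ring
        _ = y i * (xhat i - xs i) * y i := by ring
    have hyj1 : y j * (xhat j - xs j) = -t := by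
      rw [htdef]; linear_combination hblkeq
    have hxj : xhat j - xs j = t * d j := by
      rw [hdj]
      calc xhat j - xs j = (y j * y j) * (xhat j - xs j) := by rw [hy2 j]; ring
        _ = y j * (y j * (xhat j - xs j)) := by ring
        _ = y j * (-t) := by rw [hyj1]
        _ = t * (-y j) := by ring
    have hnorm : (xhat i - xs i) ^ 2 + (xhat j - xs j) ^ 2 = 2 * t ^ 2 := by
      rw [hxi, hxj, hdi, hdj]
      calc (t * y i) ^ 2 + (t * (-y j)) ^ 2
          = t ^ 2 * (y i * y i) + t ^ 2 * (y j * y j) := by ring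
        _ = 2 * t ^ 2 := by rw [hy2 i, hy2 j]; ring
    rw [hnorm, hS, one_mul]
    have hsqrt : Real.sqrt (2 * t ^ 2) = Real.sqrt 2 * |t| := by
      rw [Real.sqrt_mul (by norm_num : (0:ℝ) ≤ 2), Real.sqrt_sq_eq_abs]
    rw [hsqrt, abs_of_nonneg hα0]
    suffices hat : α ≤ |t| by
      have h2 : (0:ℝ) ≤ Real.sqrt 2 := Real.sqrt_nonneg 2
      rw [ge_iff_le]
      calc α * Real.sqrt 2 ≤ |t| * Real.sqrt 2 := mul_le_mul_of_nonneg_right hat h2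
        _ = Real.sqrt 2 * |t| := mul_comm _ _
    by_cases hgpos : 0 ≤ g
    · have : α = 0 := by rw [hα, if_pos hgpos]
      rw [this]; exact abs_nonneg t
    · push_neg at hgpos
      refine le_trans ?_ (le_abs_self t)
      -- α ≤ t
      have hαβi : α ≤ βi := hαβ.trans (by rw [hβbar]; exact min_le_left _ _)
      have hαβj : α ≤ βj := hαβ.trans (by rw [hβbar]; exact min_le_right _ _)
      have hfz : f xhat ≤ f (fun r => xs r + α * d r) := by
        apply hopt
        · intro r hri hrj
          rw [hd r, if_neg hri, if_neg hrj]; ring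
        · rw [hdi, hdj]
          linear_combination α * hy2 i - α * hy2 j
        · rcases hy i with h1 | h1
          · have hne : ¬ d i < 0 := by rw [hdi, h1]; norm_num
            rw [hβi, if_neg hne] at hαβi
            rw [hdi, h1]
            exact ⟨by linarith [(hxbox i).1], by linarith⟩
          · have hlt0 : d i < 0 := by rw [hdi, h1]; norm_num
            rw [hβi, if_pos hlt0] at hαβi
            rw [hdi, h1]
            exact ⟨by linarith, by linarith [(hxbox i).2]⟩
        · rcases hy j with h1 | h1
          · have hlt0 : d j < 0 := by rw [hdj, h1]; norm_num
            rw [hβj, if_pos hlt0] at hαβj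
            rw [hdj, h1]
            exact ⟨by linarith, by linarith [(hxbox j).2]⟩
          · have hne : ¬ d j < 0 := by rw [hdj, h1]; norm_num
            rw [hβj, if_neg hne] at hαβj
            rw [hdj, h1]
            exact ⟨by linarith [(hxbox j).1], by linarith⟩
      have hfxhat : f xhat = f xs + t * g + t ^ 2 / 2 * q := by
        have hxe : xhat = fun r => xs r + t * d r := by
          funext r
          by_cases hri : r = i
          · subst hri; linarith [hxi]
          · by_cases hrj : r = j
            · subst hrj; linarith [hxj]
            · rw [hagree r hri hrj, hd r, if_neg hri, if_neg hrj]; ring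
        rw [hxe, hf, hf, hgdef, hqdef]
        exact fval hQsym xs d t
      have hfzval : f (fun r => xs r + α * d r) = f xs + α * g + α ^ 2 / 2 * q := by
        rw [hf, hf, hgdef, hqdef]
        exact fval hQsym xs d α
      rw [hfxhat, hfzval] at hfz
      have hkey : t * g + t ^ 2 / 2 * q ≤ α * g + α ^ 2 / 2 * q := by linarith
      by_contra hlt
      push_neg at hlt
      have h1 : 0 < α - t := sub_pos.mpr hlt
      by_cases hqz : q = 0
      · rw [hqz] at hkey
        have h3 : (α - t) * g < 0 := mul_neg_of_pos_of_neg h1 hgpos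
        linarith [hkey, h3]
      · have hqpos : 0 < q := lt_of_le_of_ne hq0 (Ne.symm hqz)
        have hαle : α ≤ -g / q := by
          rw [hα, if_neg (not_le.mpr hgpos), if_neg hqz]
          exact min_le_left _ _
        have hgq : α * q ≤ -g := by rwa [le_div_iff₀ hqpos] at hαle
        have h2 : g + α * q ≤ 0 := by linarith
        have h3 : (α - t) * (g + α * q) ≤ 0 := mul_nonpos_of_nonneg_of_nonpos h1.le h2
        have h4 : 0 < (α - t) * (α - t) * q := mul_pos (mul_pos h1 h1) hqpos
        linarith [hkey, h3, h4]
end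

section
/- Let x̂_{P_i} be the optimal solution of the proximal block subproblem min_{x_{P_i} ∈ F_{P_i}} f_{P_i}(x_{P_i}, x^k_{−P_i}) + (τ/2)‖x_{P_i} − x^k_{P_i}‖², with τ ≥ 0, and let d_{P_i} = x̂_{P_i} − x^k_{P_i}. Then ∇_{P_i} f(x^k)ᵀ d_{P_i} ≤ −(τ + λ_min(Q_{P_iP_i}))‖d_{P_i}‖². -/
open Matrix Finset

/-- sufficient-descent property of the proximal block subproblem solution:
∇_P f(x^k)ᵀ d_P ≤ −(τ + λ_min(Q_PP)) ‖d_P‖². -/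
theorem proximal_block_sufficient_descent (n : ℕ) (Q : Matrix (Fin n) (Fin n) ℝ)
    (y : Fin n → ℝ) (C : ℝ)
    (hQsym : Q.IsSymm) (hQpsd : Q.PosSemidef)
    (hy : ∀ r, y r = 1 ∨ y r = -1) (hC : 0 < C)
    (f : (Fin n → ℝ) → ℝ)
    (hf : ∀ x, f x = (1 / 2) * (x ⬝ᵥ Q.mulVec x) - ∑ r, x r)
    (xk : Fin n → ℝ)
    (hfeas : (∑ r, y r * xk r) = 0 ∧ ∀ r, 0 ≤ xk r ∧ xk r ≤ C)
    (P : Finset (Fin n)) (τ : ℝ) (hτ : 0 ≤ τ)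
    -- λmin : the minimum eigenvalue of the principal submatrix Q_PP
    (lammin : ℝ)
    (hlammin : ∀ v : Fin n → ℝ, (∀ r ∉ P, v r = 0) →
      lammin * ∑ r ∈ P, v r ^ 2 ≤ v ⬝ᵥ Q.mulVec v)
    -- x̂ is the optimal solution of the proximal block subproblem over P
    (xhat : Fin n → ℝ)
    (hagree : ∀ r ∉ P, xhat r = xk r)
    (hblkeq : (∑ r ∈ P, y r * xhat r) = ∑ r ∈ P, y r * xk r)
    (hblkbox : ∀ r ∈ P, 0 ≤ xhat r ∧ xhat r ≤ C)
    (hopt : ∀ z : Fin n → ℝ, (∀ r ∉ P, z r = xk r) →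
      (∑ r ∈ P, y r * z r) = ∑ r ∈ P, y r * xk r →
      (∀ r ∈ P, 0 ≤ z r ∧ z r ≤ C) →
      f xhat + τ / 2 * ∑ r ∈ P, (xhat r - xk r) ^ 2 ≤
        f z + τ / 2 * ∑ r ∈ P, (z r - xk r) ^ 2) :
    (∑ r ∈ P, (Q.mulVec xk r - 1) * (xhat r - xk r)) ≤
      -(τ + lammin) * ∑ r ∈ P, (xhat r - xk r) ^ 2 := by
  classical
  set d : Fin n → ℝ := fun r => xhat r - xk r with hd
  have hd0 : ∀ r ∉ P, d r = 0 := fun r hr => by simp [hd, hagree r hr]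
  -- symmetry of the quadratic form
  have hsym : ∀ a b : Fin n → ℝ, a ⬝ᵥ Q.mulVec b = b ⬝ᵥ Q.mulVec a := by
    intro a b
    rw [Matrix.dotProduct_mulVec, ← Matrix.mulVec_transpose, hQsym.eq,
      dotProduct_comm]
  set S : ℝ := ∑ r ∈ P, d r ^ 2 with hS
  set A : ℝ := d ⬝ᵥ Q.mulVec d with hA
  set G : ℝ := ∑ r ∈ P, (Q.mulVec xk r - 1) * d r with hG
  have hSnonneg : 0 ≤ S := Finset.sum_nonneg fun r _ => sq_nonneg _
  have hAnonneg : 0 ≤ A := by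
    have := hQpsd.dotProduct_mulVec_nonneg d
    simpa [hA] using this
  have hAl : lammin * S ≤ A := hlammin d hd0
  -- G in terms of dot products
  have hGdot : G = xk ⬝ᵥ Q.mulVec d - ∑ r, d r := by
    have h1 : G = ∑ r, (Q.mulVec xk r - 1) * d r := by
      rw [hG]
      refine Finset.sum_subset (Finset.subset_univ P) ?_
      intro r _ hr
      rw [hd0 r hr, mul_zero]
    rw [h1, hsym xk d]
    simp only [dotProduct, sub_mul, one_mul, Finset.sum_sub_distrib]
    congr 1
    exact Finset.sum_congr rfl fun i _ => mul_comm _ _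
  -- expansion of f along the segment
  have hexp : ∀ t : ℝ, f (fun r => xk r + t * d r) = f xk + t * G + t ^ 2 / 2 * A := by
    intro t
    have hz : (fun r => xk r + t * d r) = xk + t • d := by
      funext r; simp [smul_eq_mul]
    have hq : (xk + t • d) ⬝ᵥ Q.mulVec (xk + t • d)
        = xk ⬝ᵥ Q.mulVec xk + 2 * t * (xk ⬝ᵥ Q.mulVec d) + t ^ 2 * A := by
      rw [hA]
      simp only [Matrix.mulVec_add, Matrix.mulVec_smul, dotProduct_add,
        add_dotProduct, dotProduct_smul, smul_dotProduct, smul_eq_mul]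
      rw [hsym d xk]
      ring
    have hsum : ∑ r, (xk + t • d) r = ∑ r, xk r + t * ∑ r, d r := by
      simp [Finset.sum_add_distrib, Finset.mul_sum]
    rw [hz, hf, hf, hq, hsum, hGdot]
    ring
  have hxhat : xhat = fun r => xk r + (1 : ℝ) * d r := by
    funext r; simp [hd]
  have hfxhat : f xhat = f xk + G + A / 2 := by
    rw [hxhat, hexp 1]; ring
  have hShat : ∑ r ∈ P, (xhat r - xk r) ^ 2 = S := rfl
  -- key inequality from optimality at z = xk + t d, t ∈ [0,1]
  have hkey : ∀ t : ℝ, 0 ≤ t → t ≤ 1 →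
      G + A / 2 + τ / 2 * S ≤ t * G + t ^ 2 / 2 * A + τ / 2 * (t ^ 2 * S) := by
    intro t ht0 ht1
    have hz0 : ∀ r ∉ P, (fun r => xk r + t * d r) r = xk r := by
      intro r hr; simp [hd0 r hr]
    have hzeq : (∑ r ∈ P, y r * (xk r + t * d r)) = ∑ r ∈ P, y r * xk r := by
      have hdsum : ∑ r ∈ P, y r * d r = 0 := by
        have : ∑ r ∈ P, y r * d r
            = (∑ r ∈ P, y r * xhat r) - ∑ r ∈ P, y r * xk r := by
          rw [← Finset.sum_sub_distrib]
          exact Finset.sum_congr rfl fun r _ => by simp [hd]; ring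
        rw [this, hblkeq, sub_self]
      calc ∑ r ∈ P, y r * (xk r + t * d r)
          = ∑ r ∈ P, y r * xk r + t * ∑ r ∈ P, y r * d r := by
            rw [Finset.mul_sum, ← Finset.sum_add_distrib]
            exact Finset.sum_congr rfl fun r _ => by ring
        _ = ∑ r ∈ P, y r * xk r := by rw [hdsum]; ring
    have hzbox : ∀ r ∈ P, 0 ≤ xk r + t * d r ∧ xk r + t * d r ≤ C := by
      intro r hr
      obtain ⟨h1, h2⟩ := hfeas.2 r
      obtain ⟨h3, h4⟩ := hblkbox r hr
      have hdr : d r = xhat r - xk r := rfl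
      constructor
      · nlinarith [mul_nonneg (sub_nonneg.mpr ht1) h1, mul_nonneg ht0 h3]
      · nlinarith [mul_nonneg (sub_nonneg.mpr ht1) (sub_nonneg.mpr h2),
          mul_nonneg ht0 (sub_nonneg.mpr h4)]
    have := hopt (fun r => xk r + t * d r) hz0 hzeq hzbox
    rw [hfxhat, hexp t] at this
    have hSz : ∑ r ∈ P, ((fun r => xk r + t * d r) r - xk r) ^ 2 = t ^ 2 * S := by
      rw [hS, Finset.mul_sum]
      exact Finset.sum_congr rfl fun r _ => by ring
    rw [hSz] at this
    linarith
  -- from hkey, for t < 1: G ≤ -(1 + t) * B, B = (A + τ S)/2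
  set B : ℝ := (A + τ * S) / 2 with hB
  have hBnonneg : 0 ≤ B := by
    have : 0 ≤ τ * S := mul_nonneg hτ hSnonneg
    rw [hB]; linarith
  have hlin : ∀ t : ℝ, 0 ≤ t → t < 1 → G ≤ -(1 + t) * B := by
    intro t ht0 ht1
    have h1 : (0 : ℝ) < 1 - t := by linarith
    have h2 : (1 - t) * (G + (1 + t) * B) ≤ (1 - t) * 0 := by
      have hk := hkey t ht0 ht1.le
      rw [mul_zero, hB]
      nlinarith [hk]
    have := le_of_mul_le_mul_left h2 h1
    linarith
  -- ε-argument to pass to the limit t → 1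
  have hG2B : G ≤ -2 * B := by
    refine le_of_forall_pos_le_add ?_
    intro ε hε
    rcases eq_or_lt_of_le hBnonneg with hB0 | hBpos
    · have := hlin 0 le_rfl one_pos
      rw [← hB0] at this ⊢
      linarith
    · set t : ℝ := max 0 (1 - ε / B) with htdef
      have ht0 : 0 ≤ t := le_max_left _ _
      have hεB : 0 < ε / B := div_pos hε hBpos
      have ht1 : t < 1 := by
        rw [htdef, max_lt_iff]
        constructor <;> linarith
      have hge : 1 - ε / B ≤ t := le_max_right _ _
      have h1t : 1 - t ≤ ε / B := by linarith
      have h1tB : (1 - t) * B ≤ ε := by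
        have := mul_le_mul_of_nonneg_right h1t (le_of_lt hBpos)
        rwa [div_mul_cancel₀ ε (ne_of_gt hBpos)] at this
      have := hlin t ht0 ht1
      nlinarith
  -- conclude
  have : -2 * B = -(A + τ * S) := by rw [hB]; ring
  rw [this] at hG2B
  nlinarith
end

section
/- Let ε > 0 and η > 0 be given, and {x^k} a sequence of feasible points with I_up^ε(x^k) ≠ ∅, I_low^ε(x^k) ≠ ∅ for all k, and S_MVP^ε(x^k) → 0. Then there exists k̄ such that for all k ≥ k̄, m^ε(x^k) ≤ M^ε(x^k) + η, i.e., the η-approximate ε-KKT stopping criterion holds. -/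
open Matrix Finset Filter
open scoped Classical

/-- if the ε-most-violating steps S^ε_MVP(x^k) tend to 0 along a sequence
of feasible points with nonempty ε-index sets, then the η-approximate ε-KKT stopping
criterion m^ε(x^k) ≤ M^ε(x^k) + η eventually holds. -/
theorem eps_mvs_to_zero_implies_stopping (n : ℕ) (Q : Matrix (Fin n) (Fin n) ℝ)
    (y : Fin n → ℝ) (C : ℝ)
    (hQsym : Q.IsSymm) (hQpsd : Q.PosSemidef)
    (hy : ∀ r, y r = 1 ∨ y r = -1) (hC : 0 < C)
    (ε η : ℝ) (hε : 0 < ε) (hη : 0 < η)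
    (x : ℕ → (Fin n → ℝ))
    (hfeas : ∀ k, (∑ r, y r * x k r) = 0 ∧ ∀ r, 0 ≤ x k r ∧ x k r ≤ C)
    (Iupe Ilowe : ℕ → Finset (Fin n))
    (hIupe : ∀ k, Iupe k = Finset.univ.filter
      (fun r => (x k r ≤ C - ε ∧ y r = 1) ∨ (ε ≤ x k r ∧ y r = -1)))
    (hIlowe : ∀ k, Ilowe k = Finset.univ.filter
      (fun r => (x k r ≤ C - ε ∧ y r = -1) ∨ (ε ≤ x k r ∧ y r = 1)))
    (hneup : ∀ k, (Iupe k).Nonempty) (hnelow : ∀ k, (Ilowe k).Nonempty)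
    -- the ε-most-violating pair at each iteration
    (i j : ℕ → Fin n)
    (hi : ∀ k, i k ∈ Iupe k ∧ ∀ r ∈ Iupe k,
      -(Q.mulVec (x k) r - 1) / y r ≤ -(Q.mulVec (x k) (i k) - 1) / y (i k))
    (hj : ∀ k, j k ∈ Ilowe k ∧ ∀ r ∈ Ilowe k,
      -(Q.mulVec (x k) (j k) - 1) / y (j k) ≤ -(Q.mulVec (x k) r - 1) / y r)
    (hij : ∀ k, i k ≠ j k)
    (d : ℕ → Fin n → ℝ)
    (hd : ∀ k r, d k r =
      if r = i k then 1 / y (i k) else if r = j k then -(1 / y (j k)) else 0)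
    (βbar α S : ℕ → ℝ)
    (hβbar : ∀ k, βbar k =
      min (if d k (i k) < 0 then x k (i k) else C - x k (i k))
          (if d k (j k) < 0 then x k (j k) else C - x k (j k)))
    (hα : ∀ k, α k =
      if 0 ≤ ∑ r, (Q.mulVec (x k) r - 1) * d k r then 0
      else if d k ⬝ᵥ Q.mulVec (d k) = 0 then βbar k
      else min (-(∑ r, (Q.mulVec (x k) r - 1) * d k r) / (d k ⬝ᵥ Q.mulVec (d k)))
        (βbar k))
    (hS : ∀ k, S k = |α k| * Real.sqrt 2)
    (hS0 : Filter.Tendsto S Filter.atTop (nhds 0)) :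
    ∃ kbar : ℕ, ∀ k ≥ kbar,
      (Iupe k).sup' (hneup k) (fun r => -(Q.mulVec (x k) r - 1) / y r) ≤
        (Ilowe k).inf' (hnelow k) (fun r => -(Q.mulVec (x k) r - 1) / y r) + η := by

  classical
  set B : ℝ := 1 + ∑ r, ∑ s, |Q r s| with hB
  have hBpos : 0 < B := by
    have h1 : (0:ℝ) ≤ ∑ r, ∑ s, |Q r s| :=
      Finset.sum_nonneg fun r _ => Finset.sum_nonneg fun s _ => abs_nonneg _
    simp only [hB]; linarith
  set δ : ℝ := min (η / B) ε * Real.sqrt 2 with hδ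
  have hsqrt2 : (0:ℝ) < Real.sqrt 2 := by positivity
  have hδpos : 0 < δ := mul_pos (lt_min (div_pos hη hBpos) hε) hsqrt2
  obtain ⟨kbar, hkbar⟩ := Metric.tendsto_atTop.mp hS0 δ hδpos
  refine ⟨kbar, fun k hk => ?_⟩
  have hSlt : S k < δ := by
    have := hkbar k hk
    rw [Real.dist_eq, sub_zero] at this
    have hS0' : 0 ≤ S k := by rw [hS]; positivity
    rwa [abs_of_nonneg hS0'] at this
  set g : Fin n → ℝ := fun r => -(Q.mulVec (x k) r - 1) / y r with hg
  have hsup : (Iupe k).sup' (hneup k) (fun r => -(Q.mulVec (x k) r - 1) / y r) = g (i k) :=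
    le_antisymm (Finset.sup'_le _ _ fun r hr => (hi k).2 r hr)
      (Finset.le_sup' _ (hi k).1)
  have hinf : (Ilowe k).inf' (hnelow k) (fun r => -(Q.mulVec (x k) r - 1) / y r) = g (j k) :=
    le_antisymm (Finset.inf'_le _ (hj k).1)
      (Finset.le_inf' _ _ fun r hr => (hj k).2 r hr)
  rw [hsup, hinf]
  by_contra hcon
  push_neg at hcon
  -- basic facts
  have hyabs : ∀ r, |y r| = 1 := fun r => by rcases hy r with h | h <;> simp [h]
  have hji : j k ≠ i k := Ne.symm (hij k)
  have hdi : d k (i k) = 1 / y (i k) := by rw [hd]; simp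
  have hdj : d k (j k) = -(1 / y (j k)) := by
    rw [hd, if_neg hji, if_pos rfl]
  have hxi := (hi k).1
  rw [hIupe k, Finset.mem_filter] at hxi
  have hxj := (hj k).1
  rw [hIlowe k, Finset.mem_filter] at hxj
  -- the directional derivative sum
  have hDsum : (∑ r, (Q.mulVec (x k) r - 1) * d k r) = g (j k) - g (i k) := by
    have hzero : ∀ r ∈ Finset.univ, r ∉ ({i k, j k} : Finset (Fin n)) →
        (Q.mulVec (x k) r - 1) * d k r = 0 := by
      intro r _ hr
      simp only [Finset.mem_insert, Finset.mem_singleton, not_or] at hr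
      rw [hd, if_neg hr.1, if_neg hr.2, mul_zero]
    rw [← Finset.sum_subset (Finset.subset_univ ({i k, j k} : Finset (Fin n))) hzero,
      Finset.sum_pair (hij k), hdi, hdj]
    simp only [hg, neg_div]
    ring
  have hDneg : (∑ r, (Q.mulVec (x k) r - 1) * d k r) < 0 := by
    rw [hDsum]; linarith
  have hηD : η ≤ -(∑ r, (Q.mulVec (x k) r - 1) * d k r) := by
    rw [hDsum]; linarith
  -- βbar ≥ ε
  have hβε : ε ≤ βbar k := by
    rw [hβbar]
    apply le_min
    · rcases hy (i k) with h | h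
      · rw [if_neg (by rw [hdi, h]; norm_num)]
        rcases hxi.2 with ⟨h1, _⟩ | ⟨_, h2⟩
        · linarith
        · rw [h] at h2; norm_num at h2
      · rw [if_pos (by rw [hdi, h]; norm_num)]
        rcases hxi.2 with ⟨_, h2⟩ | ⟨h1, _⟩
        · rw [h] at h2; norm_num at h2
        · exact h1
    · rcases hy (j k) with h | h
      · rw [if_pos (by rw [hdj, h]; norm_num)]
        rcases hxj.2 with ⟨_, h2⟩ | ⟨h1, _⟩
        · rw [h] at h2; norm_num at h2
        · exact h1
      · rw [if_neg (by rw [hdj, h]; norm_num)]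
        rcases hxj.2 with ⟨h1, _⟩ | ⟨_, h2⟩
        · linarith
        · rw [h] at h2; norm_num at h2
  -- PSD
  have hq0 : 0 ≤ d k ⬝ᵥ Q.mulVec (d k) := by
    have := hQpsd.dotProduct_mulVec_nonneg (d k)
    simpa using this
  -- bound on d Q d
  have hdabs : ∀ r, |d k r| ≤ 1 := by
    intro r
    rw [hd]
    split_ifs with h1 h2
    · rw [abs_div, abs_one, hyabs]; norm_num
    · rw [abs_neg, abs_div, abs_one, hyabs]; norm_num
    · simp
  have hqB : d k ⬝ᵥ Q.mulVec (d k) ≤ B := by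
    have hcalc : d k ⬝ᵥ Q.mulVec (d k) ≤ ∑ r, ∑ s, |Q r s| := by
      calc d k ⬝ᵥ Q.mulVec (d k) ≤ |d k ⬝ᵥ Q.mulVec (d k)| := le_abs_self _
        _ ≤ ∑ r, |d k r * Q.mulVec (d k) r| := by
            rw [dotProduct]; exact Finset.abs_sum_le_sum_abs _ _
        _ ≤ ∑ r, ∑ s, |Q r s| := by
            apply Finset.sum_le_sum
            intro r _
            rw [abs_mul]
            calc |d k r| * |Q.mulVec (d k) r| ≤ 1 * |Q.mulVec (d k) r| :=
              mul_le_mul_of_nonneg_right (hdabs r) (abs_nonneg _)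
              _ = |∑ s, Q r s * d k s| := by rw [one_mul, Matrix.mulVec, dotProduct]
              _ ≤ ∑ s, |Q r s * d k s| := Finset.abs_sum_le_sum_abs _ _
              _ ≤ ∑ s, |Q r s| := by
                  apply Finset.sum_le_sum
                  intro s _
                  rw [abs_mul]
                  calc |Q r s| * |d k s| ≤ |Q r s| * 1 :=
                    mul_le_mul_of_nonneg_left (hdabs s) (abs_nonneg _)
                    _ = |Q r s| := mul_one _
    simp only [hB]; linarith
  -- now case on the stepsize formula
  have hαk := hα k
  rw [if_neg (not_le.mpr hDneg)] at hαk
  by_cases hdq : d k ⬝ᵥ Q.mulVec (d k) = 0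
  · rw [if_pos hdq] at hαk
    have hSk : S k = |βbar k| * Real.sqrt 2 := by rw [hS, hαk]
    have : δ ≤ S k := by
      rw [hSk, abs_of_nonneg (le_trans hε.le hβε), hδ]
      apply mul_le_mul_of_nonneg_right _ hsqrt2.le
      exact le_trans (min_le_right _ _) hβε
    linarith
  · rw [if_neg hdq] at hαk
    have hdqpos : 0 < d k ⬝ᵥ Q.mulVec (d k) := lt_of_le_of_ne hq0 (Ne.symm hdq)
    have hfrac : η / B ≤ -(∑ r, (Q.mulVec (x k) r - 1) * d k r) / (d k ⬝ᵥ Q.mulVec (d k)) :=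
      div_le_div₀ (by linarith) hηD hdqpos hqB
    have hαge : min (η / B) ε ≤ α k := by
      rw [hαk]
      exact min_le_min hfrac hβε
    have hαnn : 0 ≤ α k :=
      le_trans (le_of_lt (lt_min (div_pos hη hBpos) hε)) hαge
    have : δ ≤ S k := by
      rw [hS, abs_of_nonneg hαnn, hδ]
      exact mul_le_mul_of_nonneg_right hαge hsqrt2.le
    linarith
end

section
/- (Nash-equilibrium counterexample) Consider n = 4, Q = I (the 4×4 identity), y = (1,1,−1,−1), C = 1, and f(x) = (1/2)‖x‖² − eᵀx over F = {x : yᵀx = 0, 0 ≤ x ≤ e}. The unique optimum is x* = (1,1,1,1). However, at x = 0 with fixed partition P₁ = {1,2}, P₂ = {3,4}, the best responses of both block subproblems (with the other block fixed) equal (0,0); hence x = 0 is a fixed point of the block-parallel update while f(0) = 0 > f(x*) = −2, so the fixed-partition scheme without block refreshing fails to reach the optimum. -/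
open Finset

/-- Nash-equilibrium counterexample: for n = 4, Q = I, y = (1,1,−1,−1),
C = 1, the unique optimum of the dual problem is x* = (1,1,1,1); yet at x = 0 with the
fixed partition P₁ = {1,2}, P₂ = {3,4} both block best responses are (0,0), so x = 0 is
a fixed point of the block-parallel update even though f(0) = 0 > f(x*) = −2. -/
theorem nash_counterexample
    (y : Fin 4 → ℝ) (hy : y 0 = 1 ∧ y 1 = 1 ∧ y 2 = -1 ∧ y 3 = -1)
    (f : (Fin 4 → ℝ) → ℝ)
    (hf : ∀ x, f x = (1 / 2) * (∑ r, x r ^ 2) - ∑ r, x r)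
    (F : Set (Fin 4 → ℝ))
    (hF : F = {x | (∑ r, y r * x r) = 0 ∧ ∀ r, 0 ≤ x r ∧ x r ≤ 1})
    (xs : Fin 4 → ℝ) (hxs : xs = fun _ => 1) :
    -- (a) x* = (1,1,1,1) is the unique minimizer of f over F
    (xs ∈ F ∧ (∀ z ∈ F, f xs ≤ f z) ∧ (∀ z ∈ F, f z = f xs → z = xs)) ∧
    -- (b) at x = 0 both block best responses are forced to be (0,0)
    (∀ a b : ℝ, y 0 * a + y 1 * b = 0 → 0 ≤ a → 0 ≤ b → a = 0 ∧ b = 0) ∧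
    (∀ a b : ℝ, y 2 * a + y 3 * b = 0 → 0 ≤ a → 0 ≤ b → a = 0 ∧ b = 0) ∧
    -- hence the objective values: f(0) = 0 > f(x*) = −2
    f (fun _ => 0) = 0 ∧ f xs = -2 := by
  obtain ⟨h0, h1, h2, h3⟩ := hy
  subst hxs
  subst hF
  have key : ∀ z : Fin 4 → ℝ, f z - f (fun _ => 1) =
      ((z 0 - 1) ^ 2 + (z 1 - 1) ^ 2 + (z 2 - 1) ^ 2 + (z 3 - 1) ^ 2) / 2 := by
    intro z
    simp only [hf, Fin.sum_univ_four]
    ring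
  refine ⟨⟨⟨?_, ?_⟩, ?_, ?_⟩, ?_, ?_, ?_, ?_⟩
  · simp [Fin.sum_univ_four, h0, h1, h2, h3]
  · intro r; norm_num
  · intro z _
    have hk := key z
    nlinarith [sq_nonneg (z 0 - 1), sq_nonneg (z 1 - 1), sq_nonneg (z 2 - 1),
      sq_nonneg (z 3 - 1)]
  · intro z _ hfz
    have hk := key z
    rw [hfz, sub_self] at hk
    have e0 : z 0 = 1 := by
      nlinarith [sq_nonneg (z 0 - 1), sq_nonneg (z 1 - 1), sq_nonneg (z 2 - 1),
        sq_nonneg (z 3 - 1)]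
    have e1 : z 1 = 1 := by
      nlinarith [sq_nonneg (z 0 - 1), sq_nonneg (z 1 - 1), sq_nonneg (z 2 - 1),
        sq_nonneg (z 3 - 1)]
    have e2 : z 2 = 1 := by
      nlinarith [sq_nonneg (z 0 - 1), sq_nonneg (z 1 - 1), sq_nonneg (z 2 - 1),
        sq_nonneg (z 3 - 1)]
    have e3 : z 3 = 1 := by
      nlinarith [sq_nonneg (z 0 - 1), sq_nonneg (z 1 - 1), sq_nonneg (z 2 - 1),
        sq_nonneg (z 3 - 1)]
    funext r
    fin_cases r
    · exact e0
    · exact e1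
    · exact e2
    · exact e3
  · intro a b h ha hb
    rw [h0, h1] at h
    constructor <;> linarith
  · intro a b h ha hb
    rw [h2, h3] at h
    constructor <;> linarith
  · simp [hf, Fin.sum_univ_four]
  · simp only [hf, Fin.sum_univ_four]; norm_num
end
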